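/- arXiv:0809.4914 — 3 statements merged into one kernel-verified Lean document; each statement's English description precedes it below -/
import Mathlib

section
/- Let $d_0,\dots,d_r$ be a difference sequence of order $r$ (i.e. $\sum d_i = 0$, $\sum d_i^2 = 1$) and let $\delta_r = \sum_{m=1}^r \big(\sum_{j=0}^{r-m} d_j d_{j+m}\big)^2$. Then $\delta_r \ge \frac{1}{4r}$. -/
open Finset

/-!
Expanding `(∑ dᵢ)² = 0` gives `1 + 2 ∑ₘ cₘ = 0` for the autocorrelations `cₘ = ∑ⱼ dⱼ dⱼ₊ₘ`,
since each product `dₖ dᵢ` with `k < i` occurs exactly once, as `m = i - k`. So `∑ₘ cₘ = -1/2`,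
and Cauchy–Schwarz over the `r` shifts gives `1/4 ≤ r ∑ₘ cₘ²`.
-/

section

variable {R : Type*} [CommRing R]

theorem sq_sum_range_eq_sum_sq_add_two_mul (f : ℕ → R) (n : ℕ) :
    (∑ i ∈ range n, f i) ^ 2 =
      ∑ i ∈ range n, f i ^ 2 + 2 * ∑ i ∈ range n, ∑ k ∈ range i, f i * f k := by
  induction n with
  | zero => simp
  | succ n ih =>
    simp only [sum_range_succ, add_sq, ih, ← mul_sum]
    ring

theorem sum_Icc_sum_range_shift {M : Type*} [AddCommMonoid M] (r : ℕ) (f : ℕ → ℕ → M) :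
    ∑ m ∈ Icc 1 r, ∑ j ∈ range (r - m + 1), f j (j + m) =
      ∑ i ∈ range (r + 1), ∑ k ∈ range i, f k i := by
  rw [sum_sigma', sum_sigma']
  refine sum_nbij' (fun p => ⟨p.2 + p.1, p.2⟩) (fun q => ⟨q.1 - q.2, q.2⟩) ?_ ?_ ?_ ?_ ?_ <;>
    rintro ⟨a, b⟩ h <;> simp_all <;> omega

def aperiodicAutocorr (d : ℕ → R) (r m : ℕ) : R :=
  ∑ j ∈ range (r - m + 1), d j * d (j + m)

theorem two_mul_sum_aperiodicAutocorr (d : ℕ → R) (r : ℕ) :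
    2 * ∑ m ∈ Icc 1 r, aperiodicAutocorr d r m =
      (∑ i ∈ range (r + 1), d i) ^ 2 - ∑ i ∈ range (r + 1), d i ^ 2 := by
  simp only [aperiodicAutocorr, sum_Icc_sum_range_shift r (fun k i => d k * d i),
    sq_sum_range_eq_sum_sq_add_two_mul]
  simp only [mul_comm (d _) (d _)]
  ring

end

theorem delta_r_lower_bound (r : ℕ) (d : ℕ → ℝ)
    (hsum : ∑ i ∈ Finset.range (r + 1), d i = 0)
    (hsq : ∑ i ∈ Finset.range (r + 1), d i ^ 2 = 1) :
    (1 : ℝ) / (4 * r) ≤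
      ∑ m ∈ Finset.Icc 1 r, (∑ j ∈ Finset.range (r - m + 1), d j * d (j + m)) ^ 2 := by
  change _ ≤ ∑ m ∈ Icc 1 r, aperiodicAutocorr d r m ^ 2
  rcases Nat.eq_zero_or_pos r with rfl | hr
  · simp
  have hsum_corr : ∑ m ∈ Icc 1 r, aperiodicAutocorr d r m = -1 / 2 := by
    have h := two_mul_sum_aperiodicAutocorr d r
    rw [hsum, hsq] at h
    linarith
  have hCS := sq_sum_le_card_mul_sum_sq (s := Icc 1 r) (f := aperiodicAutocorr d r)
  rw [hsum_corr, Nat.card_Icc, Nat.add_sub_cancel] at hCS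
  rw [div_le_iff₀ (by positivity)]
  linarith
end

section
/- Let $g : [0,1] \to \mathbb{R}^d$, $f, \beta : [0,1] \to \mathbb{R}$ be continuous with $f, \beta > 0$, suppose $H(t) = \int_t^1 \beta^{-1}(u) g(u) g(u)^T f(u)\,du$ is invertible for all $t \in [0,1)$, and fix a vector $v \in \mathbb{R}^d$. Define $\eta(t) = \int_0^t \beta^{-1/2}(x) g(x)^T v \, f(x)\,dx$. Then for all $t \in [0,1)$, $(T\eta)(t) := \eta(t) - \int_0^t \beta^{-1/2}(y) g(y)^T H^{-1}(y) \Big(\int_y^1 \beta^{-1}(z) g(z) g(z)^T v \, f(z)\,dz\Big) f(y)\,dy = 0$. -/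
open Matrix

section IntervalIntegralMulVec

variable {m n : Type*} [Fintype n] {a b : ℝ}

theorem intervalIntegral_mulVec {M : ℝ → Matrix m n ℝ}
    (hM : ∀ i j, IntervalIntegrable (fun z => M z i j) MeasureTheory.volume a b) (v : n → ℝ) :
    (fun i => ∫ z in a..b, (M z *ᵥ v) i) = (fun i j => ∫ z in a..b, M z i j) *ᵥ v := by
  funext i
  simp only [mulVec, dotProduct]
  rw [intervalIntegral.integral_finsetSum fun j _ => (hM i j).mul_const (v j)]
  simp only [intervalIntegral.integral_mul_const]

theorem intervalIntegral_weighted_dotProduct_mul_eq_mulVec (w f : ℝ → ℝ) (g : ℝ → n → ℝ)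
    (hint : ∀ i j,
      IntervalIntegrable (fun z => w z * g z i * g z j * f z) MeasureTheory.volume a b)
    (v : n → ℝ) :
    (fun i => ∫ z in a..b, w z * (g z ⬝ᵥ v) * g z i * f z)
      = (fun i j => ∫ z in a..b, w z * g z i * g z j * f z) *ᵥ v := by
  have hpointwise : ∀ z i, w z * (g z ⬝ᵥ v) * g z i * f z
      = ((fun i j => w z * g z i * g z j * f z : Matrix n n ℝ) *ᵥ v) i := by
    intro z i
    simp only [mulVec, dotProduct, Finset.mul_sum, Finset.sum_mul]
    exact Finset.sum_congr rfl fun j _ => by ring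
  simp only [hpointwise]
  exact intervalIntegral_mulVec hint v

end IntervalIntegralMulVec

theorem martingale_transform_annihilates_parametric_part_general
    (d : ℕ) (g : ℝ → Fin d → ℝ)
    (hgcont : ∀ i, ContinuousOn (fun x => g x i) (Set.Icc 0 1))
    (f β : ℝ → ℝ)
    (hf : ContinuousOn f (Set.Icc 0 1))
    (hβ : ContinuousOn β (Set.Icc 0 1)) (hβpos : ∀ x ∈ Set.Icc (0 : ℝ) 1, 0 < β x)
    (H : ℝ → Matrix (Fin d) (Fin d) ℝ)
    (hH : ∀ y, ∀ i j, H y i j = ∫ z in y..1, (β z)⁻¹ * g z i * g z j * f z)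
    (hHinv : ∀ y ∈ Set.Ico (0 : ℝ) 1, IsUnit (H y).det)
    (v : Fin d → ℝ)
    (η : ℝ → ℝ)
    (hη : ∀ t, η t = ∫ x in (0 : ℝ)..t, (Real.sqrt (β x))⁻¹ * (g x ⬝ᵥ v) * f x) :
    ∀ t ∈ Set.Ico (0 : ℝ) 1,
      η t - ∫ y in (0 : ℝ)..t,
        (Real.sqrt (β y))⁻¹ *
          (g y ⬝ᵥ ((H y)⁻¹ *ᵥ
            (fun i => ∫ z in y..1, (β z)⁻¹ * (g z ⬝ᵥ v) * g z i * f z))) * f y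
      = 0 := by
  rintro t ⟨ht0, ht1⟩
  have hHv : ∀ y ∈ Set.Ico (0 : ℝ) 1,
      (fun i => ∫ z in y..1, (β z)⁻¹ * (g z ⬝ᵥ v) * g z i * f z) = H y *ᵥ v := by
    rintro y ⟨hy0, hy1⟩
    have hcont : ∀ i j, ContinuousOn (fun z => (β z)⁻¹ * g z i * g z j * f z) (Set.Icc y 1) :=
      fun i j => ((((hβ.inv₀ fun z hz => (hβpos z hz).ne').mul (hgcont i)).mul
        (hgcont j)).mul hf).mono (Set.Icc_subset_Icc hy0 le_rfl)
    rw [intervalIntegral_weighted_dotProduct_mul_eq_mulVec (fun z => (β z)⁻¹) f g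
      (fun i j => (hcont i j).intervalIntegrable_of_Icc hy1.le) v]
    exact congrArg (· *ᵥ v) (funext₂ fun i j => (hH y i j).symm)
  have hcancel : ∀ y ∈ Set.uIcc (0 : ℝ) t,
      (Real.sqrt (β y))⁻¹ *
        (g y ⬝ᵥ ((H y)⁻¹ *ᵥ (fun i => ∫ z in y..1, (β z)⁻¹ * (g z ⬝ᵥ v) * g z i * f z))) * f y
      = (Real.sqrt (β y))⁻¹ * (g y ⬝ᵥ v) * f y := by
    intro y hy
    rw [Set.uIcc_of_le ht0] at hy
    have hy' : y ∈ Set.Ico (0 : ℝ) 1 := ⟨hy.1, hy.2.trans_lt ht1⟩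
    rw [hHv y hy', mulVec_mulVec, nonsing_inv_mul _ (hHinv y hy'), one_mulVec]
  rw [hη t, intervalIntegral.integral_congr hcancel, sub_self]

theorem martingale_transform_annihilates_parametric_part
    (d : ℕ) (g : ℝ → Fin d → ℝ)
    (hgcont : ∀ i, ContinuousOn (fun x => g x i) (Set.Icc 0 1))
    (f β : ℝ → ℝ)
    (hf : ContinuousOn f (Set.Icc 0 1)) (hfpos : ∀ x ∈ Set.Icc (0 : ℝ) 1, 0 < f x)
    (hβ : ContinuousOn β (Set.Icc 0 1)) (hβpos : ∀ x ∈ Set.Icc (0 : ℝ) 1, 0 < β x)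
    (H : ℝ → Matrix (Fin d) (Fin d) ℝ)
    (hH : ∀ y, ∀ i j, H y i j = ∫ z in y..1, (β z)⁻¹ * g z i * g z j * f z)
    (hHinv : ∀ y ∈ Set.Ico (0 : ℝ) 1, IsUnit (H y).det)
    (v : Fin d → ℝ)
    (η : ℝ → ℝ)
    (hη : ∀ t, η t = ∫ x in (0 : ℝ)..t, (Real.sqrt (β x))⁻¹ * (g x ⬝ᵥ v) * f x) :
    ∀ t ∈ Set.Ico (0 : ℝ) 1,
      η t - ∫ y in (0 : ℝ)..t,
        (Real.sqrt (β y))⁻¹ *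
          (g y ⬝ᵥ ((H y)⁻¹ *ᵥ
            (fun i => ∫ z in y..1, (β z)⁻¹ * (g z ⬝ᵥ v) * g z i * f z))) * f y
      = 0 :=
  martingale_transform_annihilates_parametric_part_general d g hgcont f β hf hβ hβpos H hH hHinv v η
    hη
end

section
/- Let $g : [0,1] \to \mathbb{R}^d$, $f, \beta : [0,1] \to \mathbb{R}$ be continuous with $f, \beta > 0$, $F(t) = \int_0^t f$, $a(y) = \beta^{-1/2}(y) g(y)$, and $H(y) = \int_y^1 a(u) a(u)^T f(u)\,du$ invertible for $y \in [0,1)$. Then for all $0 \le r \le s < 1$: $-\int_0^r a(y)^T H^{-1}(y) \Big(\int_y^r a(x) f(x)\,dx\Big) f(y)\,dy - \int_0^r a(y)^T H^{-1}(y)\Big(\int_y^s a(x) f(x)\,dx\Big) f(y)\,dy + \int_0^r \int_0^s a(y_1)^T H^{-1}(y_1) H(y_1 \vee y_2) H^{-1}(y_2) a(y_2) f(y_2) f(y_1)\,dy_2\,dy_1 = 0$. -/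
/-!
Write `b = f • a` and `K = H⁻¹`. Since `H⁻¹(y₁) H(y₁ ∨ y₂) H⁻¹(y₂) = K(y₁ ∧ y₂)`, the double
integral is `∫₀ʳ ∫₀ˢ b(y₁)ᵀ K(y₁ ∧ y₂) b(y₂)`. Splitting the inner integral at `y₁`, the part over
`[y₁, s]` is the second correction term, and the part over `[0, y₁]` becomes the first one after
exchanging the order of integration over the triangle `0 ≤ y₂ ≤ y₁ ≤ r` (an integration by parts)
and using that `K` is symmetric.
-/

open Matrix MeasureTheory intervalIntegral Set

section

variable {E : Type*} [NormedAddCommGroup E] [NormedSpace ℝ E] {v : ℝ → E} {p q t : ℝ}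

theorem continuousOn_integral_Icc_right (hpq : p ≤ q) (hv : ContinuousOn v (Icc p q)) :
    ContinuousOn (fun u => ∫ x in p..u, v x) (Icc p q) := by
  rw [← uIcc_of_le hpq] at hv ⊢
  exact continuousOn_primitive_interval hv.integrableOn_uIcc

theorem continuousOn_integral_Icc_left (hpq : p ≤ q) (hv : ContinuousOn v (Icc p q)) :
    ContinuousOn (fun u => ∫ x in u..q, v x) (Icc p q) := by
  rw [← uIcc_of_le hpq] at hv ⊢
  exact continuousOn_primitive_interval_left hv.integrableOn_uIcc

variable [CompleteSpace E]

theorem hasDerivAt_integral_right_of_continuousOn (hv : ContinuousOn v (Icc p q))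
    (ht : t ∈ Ioo p q) : HasDerivAt (fun u => ∫ x in p..u, v x) (v t) t :=
  integral_hasDerivAt_right
    ((hv.mono (Icc_subset_Icc_right ht.2.le)).intervalIntegrable_of_Icc ht.1.le)
    ((hv.mono Ioo_subset_Icc_self).stronglyMeasurableAtFilter isOpen_Ioo t ht)
    (hv.continuousAt (Icc_mem_nhds ht.1 ht.2))

theorem hasDerivAt_integral_left_of_continuousOn (hv : ContinuousOn v (Icc p q))
    (ht : t ∈ Ioo p q) : HasDerivAt (fun u => ∫ x in u..q, v x) (-v t) t :=
  integral_hasDerivAt_left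
    ((hv.mono (Icc_subset_Icc_left ht.1.le)).intervalIntegrable_of_Icc ht.2.le)
    ((hv.mono Ioo_subset_Icc_self).stronglyMeasurableAtFilter isOpen_Ioo t ht)
    (hv.continuousAt (Icc_mem_nhds ht.1 ht.2))

end

theorem integral_mul_integral_eq_integral_integral_mul {u v : ℝ → ℝ} {p q : ℝ} (hpq : p ≤ q)
    (hu : ContinuousOn u (Icc p q)) (hv : ContinuousOn v (Icc p q)) :
    ∫ y in p..q, u y * ∫ x in p..y, v x = ∫ x in p..q, (∫ y in x..q, u y) * v x := by
  have hIcc : uIcc p q = Icc p q := uIcc_of_le hpq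
  have hIoo : Ioo (min p q) (max p q) = Ioo p q := by rw [min_eq_left hpq, max_eq_right hpq]
  have parts := integral_mul_deriv_eq_deriv_mul_of_hasDerivAt (a := p) (b := q)
    (u' := fun y => -u y) (v' := v)
    (hIcc ▸ continuousOn_integral_Icc_left hpq hu) (hIcc ▸ continuousOn_integral_Icc_right hpq hv)
    (hIoo ▸ fun t ht => hasDerivAt_integral_left_of_continuousOn hu ht)
    (hIoo ▸ fun t ht => hasDerivAt_integral_right_of_continuousOn hv ht)
    (hu.neg.intervalIntegrable_of_Icc hpq) (hv.intervalIntegrable_of_Icc hpq)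
  simp only [integral_same, zero_mul, sub_zero, mul_zero, neg_mul, intervalIntegral.integral_neg,
    zero_sub, neg_neg] at parts
  exact parts.symm

section

variable {n : Type*} [Fintype n]

theorem intervalIntegral_dotProduct (u : n → ℝ) {k : ℝ → n → ℝ} {p q : ℝ}
    (hk : ∀ i, IntervalIntegrable (fun x => k x i) volume p q) :
    ∫ x in p..q, u ⬝ᵥ k x = u ⬝ᵥ fun i => ∫ x in p..q, k x i := by
  simp only [dotProduct]
  rw [integral_finsetSum fun i _ => (hk i).const_mul (u i)]
  simp only [intervalIntegral.integral_const_mul]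

theorem intervalIntegral_dotProduct_mulVec {m : Type*} [Fintype m] (u : m → ℝ)
    (M : Matrix m n ℝ) {k : ℝ → n → ℝ} {p q : ℝ}
    (hk : ∀ i, IntervalIntegrable (fun x => k x i) volume p q) :
    ∫ x in p..q, u ⬝ᵥ (M *ᵥ k x) = u ⬝ᵥ (M *ᵥ fun i => ∫ x in p..q, k x i) := by
  simp only [dotProduct_mulVec]
  exact intervalIntegral_dotProduct _ hk

theorem Matrix.IsSymm.dotProduct_mulVec_comm {M : Matrix n n ℝ} (hM : M.IsSymm) (u w : n → ℝ) :
    u ⬝ᵥ (M *ᵥ w) = w ⬝ᵥ (M *ᵥ u) := by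
  rw [dotProduct_mulVec, ← mulVec_transpose, hM.eq, dotProduct_comm]

theorem ContinuousOn.matrix_inv {X R : Type*} [TopologicalSpace X] [Field R] [TopologicalSpace R]
    [IsTopologicalDivisionRing R] [DecidableEq n] {A : X → Matrix n n R} {s : Set X}
    (hA : ContinuousOn A s) (hdet : ∀ x ∈ s, IsUnit (A x).det) :
    ContinuousOn (fun x => (A x)⁻¹) s := fun x hx =>
  (continuousAt_matrix_inv _ (by
    rw [Ring.inverse_eq_inv']
    exact continuousAt_inv₀ (hdet x hx).ne_zero)).comp_continuousWithinAt (hA x hx)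

theorem inv_mul_max_mul_inv {α R : Type*} [LinearOrder α] [CommRing R] [DecidableEq n]
    (H : α → Matrix n n R) {y₁ y₂ : α} (h₁ : IsUnit (H y₁).det) (h₂ : IsUnit (H y₂).det) :
    (H y₁)⁻¹ * H (max y₁ y₂) * (H y₂)⁻¹ = (H (min y₁ y₂))⁻¹ := by
  rcases le_total y₁ y₂ with h | h
  · simp [h, Matrix.mul_assoc, h₂]
  · simp [h, h₁]

variable {p q : ℝ}

theorem integral_dotProduct_integral_eq_integral_integral_dotProduct (hpq : p ≤ q)
    {u v : ℝ → n → ℝ} (hu : ContinuousOn u (Icc p q)) (hv : ContinuousOn v (Icc p q)) :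
    ∫ y in p..q, u y ⬝ᵥ (fun i => ∫ x in p..y, v x i) =
      ∫ x in p..q, (fun i => ∫ y in x..q, u y i) ⬝ᵥ v x := by
  have hu' := continuousOn_pi.1 hu
  have hv' := continuousOn_pi.1 hv
  simp only [dotProduct]
  rw [intervalIntegral.integral_finsetSum, intervalIntegral.integral_finsetSum]
  · exact Finset.sum_congr rfl fun i _ =>
      integral_mul_integral_eq_integral_integral_mul hpq (hu' i) (hv' i)
  · exact fun i _ => ((continuousOn_integral_Icc_left hpq (hu' i)).mul
      (hv' i)).intervalIntegrable_of_Icc hpq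
  · exact fun i _ => ((hu' i).mul
      (continuousOn_integral_Icc_right hpq (hv' i))).intervalIntegrable_of_Icc hpq

theorem integral_dotProduct_mulVec_min (u : n → ℝ) {K : ℝ → Matrix n n ℝ} {b : ℝ → n → ℝ}
    {y s : ℝ} (hpy : p ≤ y) (hys : y ≤ s) (hK : ContinuousOn K (Icc p s))
    (hb : ContinuousOn b (Icc p s)) :
    ∫ z in p..s, u ⬝ᵥ (K (min y z) *ᵥ b z) =
      u ⬝ᵥ (fun i => ∫ x in p..y, (K x *ᵥ b x) i) + u ⬝ᵥ (K y *ᵥ fun i => ∫ x in y..s, b x i) := by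
  have hmin : MapsTo (min y) (Icc p s) (Icc p s) := fun z hz =>
    ⟨le_min hpy hz.1, (min_le_right _ _).trans hz.2⟩
  have hKmin := hK.comp (continuous_const.min continuous_id).continuousOn hmin
  have hcont : ContinuousOn (fun z => u ⬝ᵥ (K (min y z) *ᵥ b z)) (Icc p s) := by fun_prop
  have hKb : ContinuousOn (fun x => K x *ᵥ b x) (Icc p s) := by fun_prop
  have hbelow : ∫ z in p..y, u ⬝ᵥ (K (min y z) *ᵥ b z) = ∫ z in p..y, u ⬝ᵥ (K z *ᵥ b z) :=
    integral_congr fun z hz => by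
      rw [uIcc_of_le hpy] at hz
      simp only [min_eq_right hz.2]
  have habove : ∫ z in y..s, u ⬝ᵥ (K (min y z) *ᵥ b z) = ∫ z in y..s, u ⬝ᵥ (K y *ᵥ b z) :=
    integral_congr fun z hz => by
      rw [uIcc_of_le hys] at hz
      simp only [min_eq_left hz.1]
  rw [← integral_add_adjacent_intervals
      ((hcont.mono (Icc_subset_Icc_right hys)).intervalIntegrable_of_Icc hpy)
      ((hcont.mono (Icc_subset_Icc_left hpy)).intervalIntegrable_of_Icc hys),
    hbelow, habove,
    intervalIntegral_dotProduct _ fun i =>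
      ((continuousOn_pi.1 hKb i).mono (Icc_subset_Icc_right hys)).intervalIntegrable_of_Icc hpy,
    intervalIntegral_dotProduct_mulVec _ _ fun i =>
      ((continuousOn_pi.1 hb i).mono (Icc_subset_Icc_left hpy)).intervalIntegrable_of_Icc hys]

theorem integral_integral_dotProduct_mulVec_min {K : ℝ → Matrix n n ℝ} {b : ℝ → n → ℝ}
    {r s : ℝ} (hpr : p ≤ r) (hrs : r ≤ s) (hK : ContinuousOn K (Icc p s))
    (hKsymm : ∀ y, (K y).IsSymm) (hb : ContinuousOn b (Icc p s)) :
    ∫ y₁ in p..r, ∫ y₂ in p..s, b y₁ ⬝ᵥ (K (min y₁ y₂) *ᵥ b y₂) =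
      (∫ y in p..r, b y ⬝ᵥ (K y *ᵥ fun i => ∫ x in y..r, b x i)) +
        ∫ y in p..r, b y ⬝ᵥ (K y *ᵥ fun i => ∫ x in y..s, b x i) := by
  have hIcc_r : Icc p r ⊆ Icc p s := Icc_subset_Icc_right hrs
  have hKb : ContinuousOn (fun x => K x *ᵥ b x) (Icc p s) := by fun_prop
  have hV : ∀ i, ContinuousOn (fun y => ∫ x in p..y, (K x *ᵥ b x) i) (Icc p r) := fun i =>
    continuousOn_integral_Icc_right hpr ((continuousOn_pi.1 hKb i).mono hIcc_r)
  have hW : ∀ i, ContinuousOn (fun y => ∫ x in y..s, b x i) (Icc p r) := fun i =>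
    (continuousOn_integral_Icc_left (hpr.trans hrs) (continuousOn_pi.1 hb i)).mono hIcc_r
  have hb_r := hb.mono hIcc_r
  have hK_r := hK.mono hIcc_r
  have h₁ : ContinuousOn (fun y => b y ⬝ᵥ fun i => ∫ x in p..y, (K x *ᵥ b x) i) (Icc p r) := by
    fun_prop
  have h₂ : ContinuousOn (fun y => b y ⬝ᵥ (K y *ᵥ fun i => ∫ x in y..s, b x i)) (Icc p r) := by
    fun_prop
  rw [integral_congr fun y hy => integral_dotProduct_mulVec_min (b y)
      ((uIcc_of_le hpr ▸ hy).1) ((uIcc_of_le hpr ▸ hy).2.trans hrs) hK hb,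
    integral_add (h₁.intervalIntegrable_of_Icc hpr) (h₂.intervalIntegrable_of_Icc hpr),
    integral_dotProduct_integral_eq_integral_integral_dotProduct hpr hb_r (hKb.mono hIcc_r)]
  congr 1
  exact integral_congr fun y _ => ((hKsymm y).dotProduct_mulVec_comm _ _).symm

end

theorem covariance_correction_terms_cancel_general
    (d : ℕ) (g : ℝ → Fin d → ℝ)
    (hgcont : ∀ i, ContinuousOn (fun x => g x i) (Set.Icc 0 1))
    (f β : ℝ → ℝ)
    (hf : ContinuousOn f (Set.Icc 0 1))
    (hβ : ContinuousOn β (Set.Icc 0 1)) (hβpos : ∀ x ∈ Set.Icc (0 : ℝ) 1, 0 < β x)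
    (a : ℝ → Fin d → ℝ) (ha : ∀ y i, a y i = (Real.sqrt (β y))⁻¹ * g y i)
    (H : ℝ → Matrix (Fin d) (Fin d) ℝ)
    (hH : ∀ y, ∀ i j, H y i j = ∫ u in y..1, a u i * a u j * f u)
    (hHinv : ∀ y ∈ Set.Ico (0 : ℝ) 1, IsUnit (H y).det) :
    ∀ r s : ℝ, 0 ≤ r → r ≤ s → s < 1 →
      (-∫ y in (0 : ℝ)..r,
          (a y ⬝ᵥ ((H y)⁻¹ *ᵥ (fun i => ∫ x in y..r, a x i * f x))) * f y)
      - (∫ y in (0 : ℝ)..r,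
          (a y ⬝ᵥ ((H y)⁻¹ *ᵥ (fun i => ∫ x in y..s, a x i * f x))) * f y)
      + (∫ y₁ in (0 : ℝ)..r, (∫ y₂ in (0 : ℝ)..s,
          (a y₁ ⬝ᵥ (((H y₁)⁻¹ * H (max y₁ y₂) * (H y₂)⁻¹) *ᵥ a y₂)) * f y₂) * f y₁)
      = 0 := by
  intro r s hr hrs hs1
  have hsub : Icc 0 s ⊆ Icc (0 : ℝ) 1 := Icc_subset_Icc_right hs1.le
  have ha_cont : ∀ i, ContinuousOn (fun x => a x i) (Icc 0 1) := fun i => by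
    simp only [ha]
    exact (hβ.sqrt.inv₀ fun x hx => (Real.sqrt_pos.2 (hβpos x hx)).ne').mul (hgcont i)
  have hH_cont : ContinuousOn H (Icc 0 1) :=
    continuousOn_pi.2 fun i => continuousOn_pi.2 fun j => by
      simp only [hH]
      exact continuousOn_integral_Icc_left zero_le_one (by fun_prop)
  have hH_symm : ∀ y, (H y).IsSymm := fun y => IsSymm.ext fun i j => by
    simp only [hH, mul_comm (a _ i)]
  have hdet : ∀ y ∈ Icc 0 s, IsUnit (H y).det := fun y hy => hHinv y ⟨hy.1, hy.2.trans_lt hs1⟩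
  let b : ℝ → Fin d → ℝ := fun y => f y • a y
  have hb : ContinuousOn b (Icc 0 s) :=
    (hf.mono hsub).smul (continuousOn_pi.2 fun i => (ha_cont i).mono hsub)
  have hsingle : ∀ y t, (a y ⬝ᵥ ((H y)⁻¹ *ᵥ fun i => ∫ x in y..t, a x i * f x)) * f y =
      b y ⬝ᵥ ((H y)⁻¹ *ᵥ fun i => ∫ x in y..t, b x i) := fun y t => by
    simp [b, smul_dotProduct, mul_comm]
  have hdouble : ∫ y₁ in (0 : ℝ)..r, (∫ y₂ in (0 : ℝ)..s,
        (a y₁ ⬝ᵥ (((H y₁)⁻¹ * H (max y₁ y₂) * (H y₂)⁻¹) *ᵥ a y₂)) * f y₂) * f y₁ =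
      ∫ y₁ in (0 : ℝ)..r, ∫ y₂ in (0 : ℝ)..s, b y₁ ⬝ᵥ ((H (min y₁ y₂))⁻¹ *ᵥ b y₂) := by
    refine integral_congr fun y₁ hy₁ => ?_
    rw [uIcc_of_le hr] at hy₁
    simp only [← intervalIntegral.integral_mul_const]
    refine integral_congr fun y₂ hy₂ => ?_
    rw [uIcc_of_le (hr.trans hrs)] at hy₂
    rw [inv_mul_max_mul_inv H (hdet y₁ ⟨hy₁.1, hy₁.2.trans hrs⟩) (hdet y₂ hy₂)]
    simp only [b, mulVec_smul, dotProduct_smul, smul_dotProduct, smul_eq_mul]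
    ring
  simp only [hsingle]
  rw [hdouble, integral_integral_dotProduct_mulVec_min (K := fun y => (H y)⁻¹) hr hrs
    ((hH_cont.mono hsub).matrix_inv hdet) (fun y => (hH_symm y).inv) hb]
  ring

theorem covariance_correction_terms_cancel
    (d : ℕ) (g : ℝ → Fin d → ℝ)
    (hgcont : ∀ i, ContinuousOn (fun x => g x i) (Set.Icc 0 1))
    (f β : ℝ → ℝ)
    (hf : ContinuousOn f (Set.Icc 0 1)) (hfpos : ∀ x ∈ Set.Icc (0 : ℝ) 1, 0 < f x)
    (hβ : ContinuousOn β (Set.Icc 0 1)) (hβpos : ∀ x ∈ Set.Icc (0 : ℝ) 1, 0 < β x)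
    (F : ℝ → ℝ) (hF : ∀ t, F t = ∫ x in (0 : ℝ)..t, f x)
    (a : ℝ → Fin d → ℝ) (ha : ∀ y i, a y i = (Real.sqrt (β y))⁻¹ * g y i)
    (H : ℝ → Matrix (Fin d) (Fin d) ℝ)
    (hH : ∀ y, ∀ i j, H y i j = ∫ u in y..1, a u i * a u j * f u)
    (hHinv : ∀ y ∈ Set.Ico (0 : ℝ) 1, IsUnit (H y).det) :
    ∀ r s : ℝ, 0 ≤ r → r ≤ s → s < 1 →
      (-∫ y in (0 : ℝ)..r,
          (a y ⬝ᵥ ((H y)⁻¹ *ᵥ (fun i => ∫ x in y..r, a x i * f x))) * f y)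
      - (∫ y in (0 : ℝ)..r,
          (a y ⬝ᵥ ((H y)⁻¹ *ᵥ (fun i => ∫ x in y..s, a x i * f x))) * f y)
      + (∫ y₁ in (0 : ℝ)..r, (∫ y₂ in (0 : ℝ)..s,
          (a y₁ ⬝ᵥ (((H y₁)⁻¹ * H (max y₁ y₂) * (H y₂)⁻¹) *ᵥ a y₂)) * f y₂) * f y₁)
      = 0 :=
  covariance_correction_terms_cancel_general d g hgcont f β hf hβ hβpos a ha H hH hHinv
end
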